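/- For every ω > 0 and every f ∈ PW_ω(ℤ) one has the Bernstein-type inequality ∑_{n∈ℤ} |f(n+1) − f(n)|² ≤ ω·∑_{n∈ℤ} |f(n)|². -/

import Mathlib

open MeasureTheory Real Set

/-- `f : ℤ → ℂ` belongs to the Paley–Wiener space `PW_ω(ℤ)`: it is square-summable
and the `L²` function `F` on `[−π, π)` whose Fourier coefficients are `f` (the image
of `f` under the Fourier–Plancherel unitary) vanishes a.e. on the set where
`4·sin²(ξ/2) > ω`. -/
def IsPaleyWienerZ (ω : ℝ) (f : ℤ → ℂ) : Prop :=
  Summable (fun k : ℤ => ‖f k‖ ^ 2) ∧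
  ∃ F : ℝ → ℂ,
    MemLp F 2 (volume.restrict (Ico (-π) π)) ∧
    (∀ᵐ ξ ∂(volume.restrict (Ico (-π) π)), ω < 4 * Real.sin (ξ / 2) ^ 2 → F ξ = 0) ∧
    ∀ k : ℤ, f k = ((1 / (2 * π) : ℝ) : ℂ) *
      ∫ ξ in Ico (-π) π, F ξ * Complex.exp (-(Complex.I * (k : ℂ) * (ξ : ℂ)))

/-! Multiplying `F` by `e^{-iξ} - 1` shifts the Fourier coefficients to `f (n + 1) - f n`, so by
Parseval both sides of the inequality are `L²` norms on the circle, and the pointwise bound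
`|e^{-iξ} - 1|² = 4 sin²(ξ/2) ≤ ω` holds wherever `F` does not vanish. -/

theorem norm_fourier_coe_sub_one_sq (T : ℝ) (n : ℤ) (x : ℝ) :
    ‖fourier n (x : AddCircle T) - 1‖ ^ 2 = 4 * Real.sin (π * n * x / T) ^ 2 := by
  rw [fourier_coe_apply, show 2 * π * Complex.I * n * x / T = Complex.I * ↑(2 * π * n * x / T) by
    push_cast; ring, Complex.norm_exp_I_mul_ofReal_sub_one, norm_mul, mul_pow, Real.norm_eq_abs,
    sq_abs]
  norm_num
  ring_nf

section FourierCoeffOn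

variable {a b : ℝ} (hab : a < b) {F : ℝ → ℂ}

theorem fourierCoeffOn_fourier_neg_one_sub_one_mul (hF : IntervalIntegrable F volume a b)
    (n : ℤ) :
    fourierCoeffOn hab (fun x : ℝ ↦ (fourier (-1) (x : AddCircle (b - a)) - 1) * F x) n =
      fourierCoeffOn hab F (n + 1) - fourierCoeffOn hab F n := by
  have hint (m : ℤ) :
      IntervalIntegrable (fun x : ℝ ↦ fourier m (x : AddCircle (b - a)) • F x) volume a b :=
    hF.continuousOn_mul ((map_continuous _).comp (AddCircle.continuous_mk' _)).continuousOn
  have hsplit (x : ℝ) : fourier (-n) (x : AddCircle (b - a)) •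
      ((fourier (-1) (x : AddCircle (b - a)) - 1) * F x) =
      fourier (-(n + 1)) (x : AddCircle (b - a)) • F x -
        fourier (-n) (x : AddCircle (b - a)) • F x := by
    simp only [neg_add, fourier_add, smul_eq_mul]
    ring
  rw [fourierCoeffOn_eq_integral, fourierCoeffOn_eq_integral, fourierCoeffOn_eq_integral]
  simp_rw [hsplit]
  rw [intervalIntegral.integral_sub (hint _) (hint _), smul_sub]

theorem memLp_fourier_sub_one_mul {μ : Measure ℝ} (hF : MemLp F 2 μ) (T : ℝ) (n : ℤ) :
    MemLp (fun x : ℝ ↦ (fourier n (x : AddCircle T) - 1) * F x) 2 μ := by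
  have hcont : Continuous fun x : ℝ ↦ fourier n (x : AddCircle T) - 1 :=
    ((map_continuous _).comp (AddCircle.continuous_mk' _)).sub continuous_const
  refine hF.of_le_mul (c := 2) (hcont.aestronglyMeasurable.mul hF.1) (ae_of_all _ fun x ↦ ?_)
  rw [norm_mul]
  gcongr
  calc ‖fourier n (x : AddCircle T) - 1‖ ≤ ‖fourier n (x : AddCircle T)‖ + ‖(1 : ℂ)‖ :=
        norm_sub_le _ _
    _ = 2 := by rw [fourier_apply, Circle.norm_coe, norm_one]; norm_num

theorem tsum_sq_fourierCoeffOn_succ_sub_le (hF : MemLp F 2 (volume.restrict (Ioc a b))) {ω : ℝ}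
    (hvan : ∀ᵐ x : ℝ ∂volume.restrict (Ioc a b),
      ω < ‖fourier (-1) (x : AddCircle (b - a)) - 1‖ ^ 2 → F x = 0) :
    ∑' n : ℤ, ‖fourierCoeffOn hab F (n + 1) - fourierCoeffOn hab F n‖ ^ 2 ≤
      ω * ∑' n : ℤ, ‖fourierCoeffOn hab F n‖ ^ 2 := by
  set H := fun x : ℝ ↦ (fourier (-1) (x : AddCircle (b - a)) - 1) * F x
  have hH : MemLp H 2 (volume.restrict (Ioc a b)) := memLp_fourier_sub_one_mul hF _ _
  have hpointwise : ∀ᵐ x : ℝ ∂volume.restrict (Ioc a b), ‖H x‖ ^ 2 ≤ ω * ‖F x‖ ^ 2 := by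
    filter_upwards [hvan] with x hx
    rw [norm_mul, mul_pow]
    rcases lt_or_ge ω (‖fourier (-1) (x : AddCircle (b - a)) - 1‖ ^ 2) with hlt | hle
    · simp [hx hlt]
    · exact mul_le_mul_of_nonneg_right hle (sq_nonneg _)
  have hFint : IntervalIntegrable F volume a b :=
    (intervalIntegrable_iff_integrableOn_Ioc_of_le hab.le).2 (hF.integrable one_le_two)
  simp_rw [← fourierCoeffOn_fourier_neg_one_sub_one_mul hab hFint]
  rw [tsum_sq_fourierCoeffOn hab hH, tsum_sq_fourierCoeffOn hab hF, smul_eq_mul, smul_eq_mul,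
    mul_left_comm ω, intervalIntegral.integral_of_le hab.le, intervalIntegral.integral_of_le hab.le,
    ← integral_const_mul ω]
  have hb : 0 ≤ (b - a)⁻¹ := inv_nonneg.2 (sub_nonneg.2 hab.le)
  exact mul_le_mul_of_nonneg_left (integral_mono_ae (hH.integrable_norm_pow two_ne_zero)
    ((hF.integrable_norm_pow two_ne_zero).const_mul ω) hpointwise) hb

end FourierCoeffOn

theorem fourier_neg_coe_two_pi (k : ℤ) (x : ℝ) :
    fourier (-k) (x : AddCircle (2 * π)) = Complex.exp (-(Complex.I * k * x)) := by
  rw [fourier_coe_apply]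
  congr 1
  have : (π : ℂ) ≠ 0 := Complex.ofReal_ne_zero.mpr pi_ne_zero
  push_cast
  field_simp

theorem fourierCoeffOn_neg_pi_pi (hπ : -π < π) (F : ℝ → ℂ) (k : ℤ) :
    fourierCoeffOn hπ F k = ((1 / (2 * π) : ℝ) : ℂ) *
      ∫ ξ in Ico (-π) π, F ξ * Complex.exp (-(Complex.I * (k : ℂ) * (ξ : ℂ))) := by
  rw [fourierCoeffOn_eq_integral, intervalIntegral.integral_of_le hπ.le,
    Measure.restrict_congr_set Ico_ae_eq_Ioc.symm, Complex.real_smul, sub_neg_eq_add, ← two_mul]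
  simp_rw [fourier_neg_coe_two_pi, smul_eq_mul, mul_comm]

theorem stmt_17 (ω : ℝ) (f : ℤ → ℂ) (hf : IsPaleyWienerZ ω f) :
    ∑' n : ℤ, ‖f (n + 1) - f n‖ ^ 2 ≤ ω * ∑' n : ℤ, ‖f n‖ ^ 2 := by
  obtain ⟨-, F, hF, hvan, hcoef⟩ := hf
  have hπ : -π < π := by linarith [pi_pos]
  obtain rfl : f = fourierCoeffOn hπ F :=
    funext fun k ↦ (hcoef k).trans (fourierCoeffOn_neg_pi_pi hπ F k).symm
  rw [Measure.restrict_congr_set Ico_ae_eq_Ioc] at hF hvan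
  refine tsum_sq_fourierCoeffOn_succ_sub_le hπ hF ?_
  filter_upwards [hvan] with x hx
  have harg : π * ((-1 : ℤ) : ℝ) * x / (π - -π) = -(x / 2) := by
    field_simp
    ring
  rwa [norm_fourier_coe_sub_one_sq, harg, sin_neg, neg_sq]
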